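/- For all n ≥ 0, the number of permutations of length n avoiding both 132 and the increasing pattern 12⋯k equals the number of Dyck paths of semilength n and height at most k−1. -/

import Mathlib

/-!
A `132`-avoiding arrangement of `a, …, a + n` splits at its maximum as `A ++ (a + n) :: B`, and
every entry of `A` exceeds every entry of `B` (otherwise `y, a + n, z` is a `132`), so `A` and `B`
are arrangements of the top `|A|` and the bottom `n - |A|` values. An increasing subsequence meets
at most one of `A ++ [a + n]` and `B`, so the arrangement avoids `12⋯(k+1)` exactly when `A`
avoids `12⋯k` and `B` avoids `12⋯(k+1)`. Dually, a nonempty Dyck path is `U P D Q` (first return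
decomposition), and it has height at most `h + 1` exactly when `P` has height at most `h` and `Q`
height at most `h + 1`. Both families thus satisfy the same recurrence with the same initial values.
-/

def Avoids132 {n : ℕ} (π : Fin n → Fin n) : Prop :=
  ¬ ∃ i j k : Fin n, i < j ∧ j < k ∧ π i < π k ∧ π k < π j

/-- `l` (with `true` an up step and `false` a down step) is a Dyck word. -/
def IsDyckWord (l : List Bool) : Prop :=
  (∀ m, (l.take m).count false ≤ (l.take m).count true) ∧
    l.count false = l.count true

open List DyckStep

namespace List

variable {α : Type*}

theorem sublist_ofFn_iff {n : ℕ} {f : Fin n → α} {s : List α} :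
    s <+ ofFn f ↔ ∃ (m : ℕ) (g : Fin m → Fin n), StrictMono g ∧ s = ofFn (f ∘ g) := by
  constructor
  · intro h
    obtain ⟨e, he⟩ := sublist_iff_exists_fin_orderEmbedding_get_eq.1 h
    refine ⟨s.length, Fin.cast length_ofFn ∘ e, fun i j hij => e.strictMono hij, ?_⟩
    refine ext_get (by simp) fun i h₁ _ => ?_
    simpa [Fin.cast] using he ⟨i, h₁⟩
  · rintro ⟨m, g, hg, rfl⟩
    rw [sublist_iff_exists_fin_orderEmbedding_get_eq]
    exact ⟨OrderEmbedding.ofStrictMono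
      (fun i => Fin.cast length_ofFn.symm (g (Fin.cast length_ofFn i))) fun i j hij => hg hij,
      fun i => by simp [Fin.cast]⟩

theorem count_take_map {β : Type*} [BEq α] [LawfulBEq α] [BEq β] [LawfulBEq β]
    {f : α → β} (hf : f.Injective) (l : List α) (i : ℕ) (a : α) :
    ((l.map f).take i).count (f a) = (l.take i).count a := by
  rw [← map_take, count_map_of_injective _ _ hf]

section Patterns

variable [LinearOrder α]

def Contains132 (l : List α) : Prop :=
  ∃ a b c, [a, b, c] <+ l ∧ a < c ∧ c < b

def HasIncreasingSublist (k : ℕ) (l : List α) : Prop :=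
  ∃ s, s <+ l ∧ s.length = k ∧ s.Pairwise (· < ·)

theorem contains132_ofFn_iff {n : ℕ} {f : Fin n → α} :
    (ofFn f).Contains132 ↔ ∃ i j k, i < j ∧ j < k ∧ f i < f k ∧ f k < f j := by
  constructor
  · rintro ⟨a, b, c, hs, hac, hcb⟩
    obtain ⟨m, g, hg, he⟩ := sublist_ofFn_iff.1 hs
    obtain rfl : 3 = m := by simpa using congrArg length he
    simp only [ofFn_succ, ofFn_zero, cons.injEq, Function.comp_apply] at he
    obtain ⟨rfl, rfl, rfl, -⟩ := he
    exact ⟨g 0, g 1, g 2, hg (by decide), hg (by decide), hac, hcb⟩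
  · rintro ⟨i, j, k, hij, hjk, hik, hkj⟩
    refine ⟨f i, f j, f k, sublist_ofFn_iff.2 ⟨3, ![i, j, k], ?_, ?_⟩, hik, hkj⟩
    · simp [Fin.strictMono_iff_lt_succ, Fin.forall_fin_two, hij, hjk]
    · simp [ofFn_succ]

theorem hasIncreasingSublist_ofFn_iff {n k : ℕ} {f : Fin n → α} :
    (ofFn f).HasIncreasingSublist k ↔
      ∃ g : Fin k → Fin n, StrictMono g ∧ StrictMono (f ∘ g) := by
  constructor
  · rintro ⟨s, hs, rfl, hsort⟩
    obtain ⟨m, g, hg, rfl⟩ := sublist_ofFn_iff.1 hs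
    rw [length_ofFn]
    exact ⟨g, hg, fun i j hij => pairwise_ofFn.1 hsort hij⟩
  · rintro ⟨g, hg, hfg⟩
    exact ⟨ofFn (f ∘ g), sublist_ofFn_iff.2 ⟨k, g, hg, rfl⟩, length_ofFn,
      pairwise_ofFn.2 fun i j hij => hfg hij⟩

theorem HasIncreasingSublist.of_succ {k : ℕ} {l : List α}
    (h : l.HasIncreasingSublist (k + 1)) : l.HasIncreasingSublist k := by
  obtain ⟨s, hs, hlen, hsort⟩ := h
  exact ⟨s.tail, (tail_sublist s).trans hs, by simp [hlen], hsort.sublist (tail_sublist s)⟩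

variable {A B : List α} {x : α}

theorem contains132_append_cons_iff (hA : ∀ a ∈ A, a < x) (hB : ∀ b ∈ B, b < x)
    (hAB : ∀ a ∈ A, ∀ b ∈ B, b < a) :
    (A ++ x :: B).Contains132 ↔ A.Contains132 ∨ B.Contains132 := by
  constructor
  · rintro ⟨a, b, c, hs, hac, hcb⟩
    have hbx : b ≤ x := by
      rcases mem_append.1 (hs.subset (by simp : b ∈ [a, b, c])) with hb | hb
      · exact (hA b hb).le
      · rcases mem_cons.1 hb with rfl | hb
        exacts [le_rfl, (hB b hb).le]
    have hcx : c < x := hcb.trans_le hbx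
    -- an occurrence cannot begin in `A` and end in `B`, which lies below `A`
    have hcross : a ∈ A → c ∈ x :: B → False := fun ha hc =>
      lt_asymm hac (hAB a ha c ((mem_cons.1 hc).resolve_left hcx.ne))
    obtain ⟨r₁, r₂, he, h₁, h₂⟩ := sublist_append_iff.1 hs
    rcases r₁ with _ | ⟨a', _ | ⟨b', _ | ⟨c', _ | ⟨d', r₁⟩⟩⟩⟩ <;>
      simp only [nil_append, cons_append, cons.injEq, reduceCtorEq, and_false] at he
    · subst he
      rcases sublist_cons_iff.1 h₂ with h | ⟨r, hr, -⟩
      · exact Or.inr ⟨a, b, c, h, hac, hcb⟩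
      · obtain rfl : a = x := (cons.inj hr).1
        exact absurd (hac.trans hcx) (lt_irrefl a)
    · obtain ⟨rfl, rfl⟩ := he
      exact (hcross (h₁.subset (by simp)) (h₂.subset (by simp))).elim
    · obtain ⟨rfl, rfl, rfl⟩ := he
      exact (hcross (h₁.subset (by simp)) (h₂.subset (by simp))).elim
    · obtain ⟨rfl, rfl, rfl, -⟩ := he
      exact Or.inl ⟨a, b, c, h₁, hac, hcb⟩
  · rintro (⟨a, b, c, hs, h⟩ | ⟨a, b, c, hs, h⟩)
    · exact ⟨a, b, c, hs.trans (sublist_append_left _ _), h⟩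
    · exact ⟨a, b, c, (hs.cons x).trans (sublist_append_right _ _), h⟩

theorem hasIncreasingSublist_succ_append_cons_iff {k : ℕ} (hA : ∀ a ∈ A, a < x)
    (hB : ∀ b ∈ B, b < x) (hAB : ∀ a ∈ A, ∀ b ∈ B, b < a) :
    (A ++ x :: B).HasIncreasingSublist (k + 1) ↔
      A.HasIncreasingSublist k ∨ B.HasIncreasingSublist (k + 1) := by
  constructor
  · rintro ⟨s, hs, hlen, hsort⟩
    obtain ⟨r₁, r₂, rfl, h₁, h₂⟩ := sublist_append_iff.1 hs
    obtain ⟨hsort₁, hsort₂, hcross⟩ := pairwise_append.1 hsort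
    rcases sublist_cons_iff.1 h₂ with h₂ | ⟨r, rfl, hr⟩
    · rcases eq_or_ne r₁ [] with rfl | hr₁
      · exact Or.inr ⟨r₂, h₂, hlen, hsort₂⟩
      rcases eq_or_ne r₂ [] with rfl | hr₂
      · exact Or.inl (HasIncreasingSublist.of_succ ⟨r₁, h₁, by simpa using hlen, hsort₁⟩)
      obtain ⟨y, hy⟩ := exists_mem_of_ne_nil r₁ hr₁
      obtain ⟨z, hz⟩ := exists_mem_of_ne_nil r₂ hr₂
      exact (lt_asymm (hcross y hy z hz) (hAB y (h₁.subset hy) z (h₂.subset hz))).elim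
    · obtain rfl : r = [] := eq_nil_iff_forall_not_mem.2 fun z hz =>
        lt_asymm (hB z (hr.subset hz)) (rel_of_pairwise_cons hsort₂ hz)
      exact Or.inl ⟨r₁, h₁, by simpa using hlen, hsort₁⟩
  · rintro (⟨s, hs, rfl, hsort⟩ | ⟨s, hs, hlen, hsort⟩)
    · refine ⟨s ++ [x], hs.append ((nil_sublist B).cons_cons x), length_append, ?_⟩
      exact pairwise_append.2 ⟨hsort, pairwise_singleton _ _, fun a ha b hb => by
        rw [mem_singleton.1 hb]; exact hA a (hs.subset ha)⟩
    · exact ⟨s, (hs.cons x).trans (sublist_append_right A _), hlen, hsort⟩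

theorem avoids_append_cons_iff {k : ℕ} (hA : ∀ a ∈ A, a < x) (hB : ∀ b ∈ B, b < x)
    (hAB : ∀ a ∈ A, ∀ b ∈ B, b < a) :
    (¬ (A ++ x :: B).Contains132 ∧ ¬ (A ++ x :: B).HasIncreasingSublist (k + 1)) ↔
      (¬ A.Contains132 ∧ ¬ A.HasIncreasingSublist k) ∧
        (¬ B.Contains132 ∧ ¬ B.HasIncreasingSublist (k + 1)) := by
  rw [contains132_append_cons_iff hA hB hAB, hasIncreasingSublist_succ_append_cons_iff hA hB hAB]
  tauto

end Patterns

section Intervals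

-- Sorting both blocks gives a sorted arrangement of the interval, i.e. the interval itself.
theorem perm_range'_of_append_perm {l₁ l₂ : List ℕ} {a p q : ℕ}
    (h : l₁ ++ l₂ ~ range' a (p + q)) (hlen : l₁.length = p)
    (hlt : ∀ x ∈ l₁, ∀ y ∈ l₂, x < y) :
    l₁ ~ range' a p ∧ l₂ ~ range' (a + p) q := by
  set s₁ := l₁.insertionSort (· ≤ ·)
  set s₂ := l₂.insertionSort (· ≤ ·)
  have hsorted : s₁ ++ s₂ = range' a p ++ range' (a + p) q := by
    rw [range'_append_1]
    refine Perm.eq_of_sortedLE ?_ (sortedLE_range' _ _ _)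
      (((perm_insertionSort _ _).append (perm_insertionSort _ _)).trans h)
    simp only [sortedLE_iff_pairwise, pairwise_append]
    exact ⟨sortedLE_insertionSort.pairwise, sortedLE_insertionSort.pairwise, fun x hx y hy =>
      (hlt x ((mem_insertionSort _).1 hx) y ((mem_insertionSort _).1 hy)).le⟩
  obtain ⟨h₁, h₂⟩ := append_inj hsorted (by simp [s₁, hlen])
  rw [← h₁, ← h₂]
  exact ⟨(perm_insertionSort _ _).symm, (perm_insertionSort _ _).symm⟩

variable {A B : List ℕ} {a n m : ℕ}

theorem perm_range'_append_cons (hm : m ≤ n) (hA : A ~ range' (a + (n - m)) m)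
    (hB : B ~ range' a (n - m)) : A ++ (a + n) :: B ~ range' a (n + 1) := by
  have hBA : B ++ A ~ range' a n := by
    simpa [Nat.sub_add_cancel hm] using hB.append hA
  calc A ++ (a + n) :: B ~ (B ++ A) ++ [a + n] :=
        perm_middle.trans ((perm_append_comm.cons _).trans (perm_append_singleton _ _).symm)
    _ ~ range' a (n + 1) := by
        rw [range'_concat, one_mul]
        exact hBA.append_right _

theorem blocks_lt_of_perm_range' (hm : m ≤ n) (hA : A ~ range' (a + (n - m)) m)
    (hB : B ~ range' a (n - m)) :
    (∀ y ∈ A, y < a + n) ∧ (∀ z ∈ B, z < a + n) ∧ ∀ y ∈ A, ∀ z ∈ B, z < y := by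
  simp only [hA.mem_iff, hB.mem_iff, mem_range'_1]
  refine ⟨fun y hy => ?_, fun z hz => ?_, fun y hy z hz => ?_⟩ <;> omega

theorem exists_eq_append_cons_of_perm_range' {l : List ℕ} (hl : l ~ range' a (n + 1))
    (h132 : ¬ l.Contains132) :
    ∃ A B, l = A ++ (a + n) :: B ∧ A.length ≤ n ∧
      A ~ range' (a + (n - A.length)) A.length ∧ B ~ range' a (n - A.length) := by
  obtain ⟨A, B, rfl⟩ := append_of_mem (a := a + n)
    (hl.mem_iff.2 (mem_range'_1.2 ⟨Nat.le_add_right a n, by omega⟩))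
  have hnd : (A ++ (a + n) :: B).Nodup := hl.nodup_iff.2 nodup_range'
  have hAB_perm : A ++ B ~ range' a n := by
    rw [range'_concat, one_mul] at hl
    exact (perm_append_right_iff [a + n]).1
      (((perm_append_singleton _ _).trans perm_middle.symm).trans hl)
  have hlt : ∀ y ∈ A ++ B, y < a + n := fun y hy => (mem_range'_1.1 (hAB_perm.subset hy)).2
  have hAB : ∀ y ∈ A, ∀ z ∈ B, z < y := by
    intro y hy z hz
    refine lt_of_le_of_ne
      (not_lt.1 fun hyz => h132 ⟨y, a + n, z, ?_, hyz, hlt z (by simp [hz])⟩) ?_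
    · exact (singleton_sublist.2 hy).append ((singleton_sublist.2 hz).cons_cons _)
    · rintro rfl
      exact (nodup_append.1 (nodup_middle.1 hnd).of_cons).2.2 z hy z hz rfl
  have hlen : A.length + B.length = n := by simpa using hAB_perm.length_eq
  obtain ⟨hB, hA⟩ := perm_range'_of_append_perm (p := n - A.length) (q := A.length)
    (perm_append_comm.trans (by rwa [Nat.sub_add_cancel (by omega)])) (by omega)
    fun z hz y hy => hAB y hy z hz
  exact ⟨A, B, rfl, by omega, hA, hB⟩

end Intervals

end List

theorem Nat.card_eq_sum_card_mul_card_of_bijective {n : ℕ} {X Y : Fin n → Type*}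
    [∀ m, Finite (X m)] [∀ m, Finite (Y m)] {Z : Type*} (f : (Σ m, X m × Y m) → Z)
    (hf : f.Bijective) : Nat.card Z = ∑ m, Nat.card (X m) * Nat.card (Y m) := by
  simp [← Nat.card_eq_of_bijective f hf, Nat.card_sigma, Nat.card_prod]

/-- Arrangements of `a, …, a + n - 1` avoiding `132` and `12⋯k`. The offset `a` lets both blocks
of the decomposition at the maximum be counted without renormalising their entries. -/
def Av132Inc (a n k : ℕ) : Type :=
  {l : List ℕ // l ~ range' a n ∧ ¬ l.Contains132 ∧ ¬ l.HasIncreasingSublist k}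

namespace Av132Inc

instance (a n k : ℕ) : Finite (Av132Inc a n k) :=
  Finite.of_injective
    (fun l => (⟨l.1, mem_permutations.2 l.2.1⟩ : {l // l ∈ (range' a n).permutations}))
    fun _ _ hl => Subtype.ext (Subtype.mk_eq_mk.1 hl)

theorem card_zero (a h : ℕ) : Nat.card (Av132Inc a 0 (h + 1)) = 1 := by
  have : Unique (Av132Inc a 0 (h + 1)) :=
    { default := ⟨[], by simp, fun ⟨_, _, _, hs, _⟩ => by simp at hs,
        fun ⟨s, hs, hlen, _⟩ => by simp_all⟩
      uniq := fun ⟨l, hl, _⟩ => Subtype.ext (by simpa using hl) }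
  exact Nat.card_unique

theorem card_succ_one (a n : ℕ) : Nat.card (Av132Inc a (n + 1) 1) = 0 := by
  have : IsEmpty (Av132Inc a (n + 1) 1) := ⟨fun ⟨l, hl, _, hinc⟩ => hinc
    ⟨[a], singleton_sublist.2 (hl.mem_iff.2 (by simp)), rfl, pairwise_singleton _ _⟩⟩
  exact Nat.card_of_isEmpty

def join {a n k : ℕ}
    (x : Σ m : Fin (n + 1), Av132Inc (a + (n - m)) m k × Av132Inc a (n - m) (k + 1)) :
    Av132Inc a (n + 1) (k + 1) :=
  have hm : (x.1 : ℕ) ≤ n := Nat.lt_succ_iff.1 x.1.2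
  have hb := blocks_lt_of_perm_range' hm x.2.1.2.1 x.2.2.2.1
  ⟨x.2.1.1 ++ (a + n) :: x.2.2.1, perm_range'_append_cons hm x.2.1.2.1 x.2.2.2.1,
    (avoids_append_cons_iff hb.1 hb.2.1 hb.2.2).2 ⟨x.2.1.2.2, x.2.2.2.2⟩⟩

theorem join_bijective {a n k : ℕ} : (join (a := a) (n := n) (k := k)).Bijective := by
  constructor
  · rintro ⟨m, ⟨A, hA⟩, ⟨B, hB⟩⟩ ⟨m', ⟨A', hA'⟩, ⟨B', hB'⟩⟩ he
    have hb := blocks_lt_of_perm_range' (Nat.lt_succ_iff.1 m.2) hA.1 hB.1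
    have he : A ++ (a + n) :: B = A' ++ (a + n) :: B' := Subtype.mk_eq_mk.1 he
    obtain ⟨rfl, -, rfl⟩ := (append_cons_inj_of_notMem (fun h => (hb.1 _ h).false)
      (fun h => (hb.2.1 _ h).false)).1 he
    obtain rfl : m = m' := Fin.ext <| by
      simpa using hA.1.length_eq.symm.trans hA'.1.length_eq
    rfl
  · rintro ⟨l, hl, h132, hinc⟩
    obtain ⟨A, B, rfl, hm, hA, hB⟩ := exists_eq_append_cons_of_perm_range' hl h132
    have hb := blocks_lt_of_perm_range' hm hA hB
    obtain ⟨hA', hB'⟩ := (avoids_append_cons_iff hb.1 hb.2.1 hb.2.2).1 ⟨h132, hinc⟩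
    exact ⟨⟨⟨A.length, Nat.lt_succ_iff.2 hm⟩, ⟨A, hA, hA'⟩, ⟨B, hB, hB'⟩⟩, rfl⟩

theorem card_succ_succ (a n k : ℕ) : Nat.card (Av132Inc a (n + 1) (k + 1)) =
    ∑ m : Fin (n + 1),
      Nat.card (Av132Inc (a + (n - m)) m k) * Nat.card (Av132Inc a (n - m) (k + 1)) :=
  Nat.card_eq_sum_card_mul_card_of_bijective _ join_bijective

theorem card_perm_eq (n k : ℕ) :
    Nat.card {π : Equiv.Perm (Fin n) // Avoids132 ⇑π ∧
        ¬ ∃ f : Fin k → Fin n, StrictMono f ∧ StrictMono (⇑π ∘ f)} =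
      Nat.card (Av132Inc 0 n k) := by
  refine Nat.card_eq_of_bijective (fun π => ⟨ofFn fun i => (π.1 i : ℕ), ?_, ?_, ?_⟩)
    ⟨?_, ?_⟩
  · refine (Nodup.subperm ?_ fun x hx => ?_).perm_of_length_le (by simp)
    · exact nodup_ofFn.2 (Fin.val_injective.comp π.1.injective)
    · obtain ⟨i, rfl⟩ := mem_ofFn.1 hx
      simp
  · rw [contains132_ofFn_iff]
    exact π.2.1
  · rw [hasIncreasingSublist_ofFn_iff]
    exact π.2.2
  · intro π σ h
    have h := ofFn_injective (Subtype.mk_eq_mk.1 h)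
    exact Subtype.ext (Equiv.ext fun i => Fin.ext (congrFun h i))
  · rintro ⟨l, hl, h132, hinc⟩
    obtain rfl : l.length = n := by simpa using hl.length_eq
    have hlt (i : Fin l.length) : l[i] < l.length := by
      simpa using mem_range'_1.1 (hl.subset (getElem_mem i.2))
    let π : Equiv.Perm (Fin l.length) := Equiv.ofBijective (fun i => ⟨l[i], hlt i⟩)
      (Finite.injective_iff_bijective.1 fun i j hij =>
        Fin.ext ((hl.nodup_iff.2 nodup_range').getElem_inj_iff.1 (Fin.mk_eq_mk.1 hij)))
    have hπ : ofFn (fun i => (π i : ℕ)) = l := ofFn_getElem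
    refine ⟨⟨π, ?_, ?_⟩, Subtype.ext hπ⟩
    · rwa [← hπ, contains132_ofFn_iff] at h132
    · rwa [← hπ, hasIncreasingSublist_ofFn_iff] at hinc

end Av132Inc

namespace DyckWord

def HeightLE (h : ℕ) (p : DyckWord) : Prop :=
  ∀ i, (p.toList.take i).count U ≤ (p.toList.take i).count D + h

variable {p q : DyckWord} {h : ℕ}

theorem eq_zero_of_semilength_eq_zero (hp : p.semilength = 0) : p = 0 := by
  by_contra hne
  exact (strictMono_semilength (DyckWord.pos_iff_ne_zero.2 hne)).ne' hp

theorem heightLE_zero : (0 : DyckWord).HeightLE h := fun i => by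
  simp [show (0 : DyckWord).toList = [] from rfl]

theorem count_U_take_eq_count_D_take {i : ℕ} (hi : p.toList.length ≤ i) :
    (p.toList.take i).count U = (p.toList.take i).count D := by
  rw [take_of_length_le hi, p.count_U_eq_count_D]

theorem heightLE_add : (p + q).HeightLE h ↔ p.HeightLE h ∧ q.HeightLE h := by
  have hpq : (p + q).toList = p.toList ++ q.toList := rfl
  simp only [HeightLE, hpq, take_append, count_append]
  constructor
  · intro H
    refine ⟨fun i => ?_, fun j => ?_⟩
    · have := q.count_D_le_count_U (i - p.toList.length)
      have := H i
      omega
    · have := H (p.toList.length + j)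
      rw [count_U_take_eq_count_D_take (by omega), Nat.add_sub_cancel_left] at this
      omega
  · rintro ⟨Hp, Hq⟩ i
    rcases le_total i p.toList.length with hi | hi
    · rw [Nat.sub_eq_zero_of_le hi]
      simpa using Hp i
    · have := Hq (i - p.toList.length)
      rw [count_U_take_eq_count_D_take hi]
      omega

theorem heightLE_nest : p.nest.HeightLE (h + 1) ↔ p.HeightLE h := by
  have hnest : p.nest.toList = U :: (p.toList ++ [D]) := rfl
  simp only [HeightLE, hnest]
  constructor
  · intro H i
    rcases le_total i p.toList.length with hi | hi
    · have := H (i + 1)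
      simp only [take_succ_cons, count_cons, take_append, count_append,
        Nat.sub_eq_zero_of_le hi] at this
      simp at this
      omega
    · rw [count_U_take_eq_count_D_take hi]
      omega
  · rintro H (_ | i)
    · simp
    · have hD : (List.take (i - p.toList.length) [D]).count U = 0 := by
        cases i - p.toList.length <;> simp
      have := H i
      simp only [take_succ_cons, count_cons, take_append, count_append, hD]
      simp
      omega

end DyckWord

def BoundedDyckWord (n h : ℕ) : Type :=
  {p : DyckWord // p.semilength = n ∧ p.HeightLE h}

namespace BoundedDyckWord

instance (n h : ℕ) : Finite (BoundedDyckWord n h) :=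
  Finite.of_injective (fun p => (⟨p.1, p.2.1⟩ : {p : DyckWord // p.semilength = n}))
    fun _ _ hpq => Subtype.ext (Subtype.mk_eq_mk.1 hpq)

theorem card_zero (h : ℕ) : Nat.card (BoundedDyckWord 0 h) = 1 := by
  have : Unique (BoundedDyckWord 0 h) :=
    { default := ⟨0, rfl, DyckWord.heightLE_zero⟩
      uniq := fun ⟨p, hp, _⟩ => Subtype.ext (DyckWord.eq_zero_of_semilength_eq_zero hp) }
  exact Nat.card_unique

theorem card_succ_zero (n : ℕ) : Nat.card (BoundedDyckWord (n + 1) 0) = 0 := by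
  have : IsEmpty (BoundedDyckWord (n + 1) 0) := ⟨fun ⟨p, hp, hh⟩ => by
    have hne : p ≠ 0 := by rintro rfl; simp at hp
    have := hh 1
    rw [← p.cons_tail_dropLast_concat hne] at this
    simp at this⟩
  exact Nat.card_of_isEmpty

def join {n h : ℕ}
    (x : Σ m : Fin (n + 1), BoundedDyckWord m h × BoundedDyckWord (n - m) (h + 1)) :
    BoundedDyckWord (n + 1) (h + 1) :=
  ⟨x.2.1.1.nest + x.2.2.1, by simp [x.2.1.2.1, x.2.2.2.1]; omega,
    DyckWord.heightLE_add.2 ⟨DyckWord.heightLE_nest.2 x.2.1.2.2, x.2.2.2.2⟩⟩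

theorem join_bijective {n h : ℕ} : (join (n := n) (h := h)).Bijective := by
  constructor
  · rintro ⟨m, ⟨p, hp⟩, ⟨q, hq⟩⟩ ⟨m', ⟨p', hp'⟩, ⟨q', hq'⟩⟩ he
    have he : p.nest + q = p'.nest + q' := congrArg Subtype.val he
    obtain rfl : p = p' := by simpa using congrArg DyckWord.insidePart he
    obtain rfl : q = q' := by simpa using congrArg DyckWord.outsidePart he
    obtain rfl : m = m' := Fin.ext (hp.1.symm.trans hp'.1)
    rfl
  · rintro ⟨p, hp, hh⟩
    have hne : p ≠ 0 := by rintro rfl; simp at hp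
    have hlen := DyckWord.semilength_insidePart_add_semilength_outsidePart_add_one hne
    rw [← DyckWord.nest_insidePart_add_outsidePart hne, DyckWord.heightLE_add,
      DyckWord.heightLE_nest] at hh
    exact ⟨⟨⟨p.insidePart.semilength, by omega⟩, ⟨p.insidePart, rfl, hh.1⟩,
      ⟨p.outsidePart, by simp; omega, hh.2⟩⟩,
      Subtype.ext (DyckWord.nest_insidePart_add_outsidePart hne)⟩

theorem card_succ_succ (n h : ℕ) : Nat.card (BoundedDyckWord (n + 1) (h + 1)) =
    ∑ m : Fin (n + 1),
      Nat.card (BoundedDyckWord m h) * Nat.card (BoundedDyckWord (n - m) (h + 1)) :=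
  Nat.card_eq_sum_card_mul_card_of_bijective _ join_bijective

end BoundedDyckWord

def DyckStep.equivBool : DyckStep ≃ Bool where
  toFun s := s = U
  invFun b := if b then U else D
  left_inv s := by cases s <;> rfl
  right_inv b := by cases b <;> rfl

theorem BoundedDyckWord.card_eq_card_bool (n h : ℕ) :
    Nat.card (BoundedDyckWord n h) = Nat.card {l : List Bool // l.length = 2 * n ∧
      IsDyckWord l ∧ ∀ m, (l.take m).count true ≤ (l.take m).count false + h} := by
  let e := DyckStep.equivBool
  have hU : e U = true := rfl
  have hD : e D = false := rfl
  have hcount (l : List DyckStep) (i : ℕ) (s : DyckStep) :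
      ((l.map e).take i).count (e s) = (l.take i).count s :=
    count_take_map e.injective l i s
  have hcount' (l : List DyckStep) (s : DyckStep) : (l.map e).count (e s) = l.count s :=
    count_map_of_injective _ _ e.injective s
  refine Nat.card_eq_of_bijective (fun p => ⟨p.1.toList.map e, ?_, ⟨?_, ?_⟩, ?_⟩)
    ⟨?_, ?_⟩
  · rw [length_map, ← p.1.two_mul_semilength_eq_length, p.2.1]
  · intro m
    rw [← hU, ← hD, hcount, hcount]
    exact p.1.count_D_le_count_U m
  · rw [← hU, ← hD, hcount', hcount', p.1.count_U_eq_count_D]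
  · intro m
    rw [← hU, ← hD, hcount, hcount]
    exact p.2.2 m
  · intro p q hpq
    exact Subtype.ext (DyckWord.ext (map_injective_iff.2 e.injective (congrArg Subtype.val hpq)))
  · rintro ⟨b, hlen, ⟨hd, hbal⟩, hb⟩
    obtain ⟨l, rfl⟩ : ∃ l, l.map e = b := ⟨b.map e.symm, by simp [map_map]⟩
    rw [← hU, ← hD] at hd hbal hb
    simp only [hcount, hcount'] at hd hbal hb
    let p : DyckWord := ⟨l, hbal.symm, hd⟩
    have hp : p.semilength = n := by
      have := p.two_mul_semilength_eq_length
      rw [length_map] at hlen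
      change 2 * p.semilength = l.length at this
      omega
    exact ⟨⟨p, hp, hb⟩, rfl⟩

theorem Av132Inc.card_eq_card_boundedDyckWord (n : ℕ) :
    ∀ a h, Nat.card (Av132Inc a n (h + 1)) = Nat.card (BoundedDyckWord n h) := by
  induction n using Nat.strong_induction_on with
  | _ n ih =>
  intro a h
  rcases n with _ | n
  · rw [Av132Inc.card_zero, BoundedDyckWord.card_zero]
  rcases h with _ | h
  · rw [Av132Inc.card_succ_one, BoundedDyckWord.card_succ_zero]
  rw [Av132Inc.card_succ_succ, BoundedDyckWord.card_succ_succ]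
  refine Finset.sum_congr rfl fun m _ => ?_
  rw [ih m (by omega), ih (n - m) (by omega)]

theorem count_av132_id_eq_bounded_dyck (n k : ℕ) (hk : 1 ≤ k) :
    Nat.card {π : Equiv.Perm (Fin n) // Avoids132 ⇑π ∧
        ¬ ∃ f : Fin k → Fin n, StrictMono f ∧ StrictMono (⇑π ∘ f)} =
      Nat.card {l : List Bool // l.length = 2 * n ∧ IsDyckWord l ∧
        ∀ m, (l.take m).count true ≤ (l.take m).count false + (k - 1)} := by
  obtain ⟨h, rfl⟩ : ∃ h, k = h + 1 := ⟨k - 1, by omega⟩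
  rw [Av132Inc.card_perm_eq, Av132Inc.card_eq_card_boundedDyckWord, Nat.add_sub_cancel,
    BoundedDyckWord.card_eq_card_bool]
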